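/- arXiv:2603.08244 — 6 statements merged into one kernel-verified Lean document; each statement's English description precedes it below -/
import Mathlib

section
/- Let a, K, σ² be positive real constants and c ≥ 0. Define the SINR function γ(x) = a·K·x/(c·K·x + σ²) for x ≥ 0, and for constants μ ≥ 0, m > 0, N_c ≥ 0 define the security threshold β̃(γ) = (1+γ)·exp(((μ·√(V(γ)) + N_c)/√m)·ln 2) − 1, where V(γ) = (log₂ e)²·(1 − (1+γ)⁻²) is the channel dispersion. Then the composite function x ↦ β̃(γ(x)) is monotonically increasing on [0, ∞). -/
open Real

/-- Channel dispersion `V(γ) = (log₂ e)² · (1 − (1+γ)⁻²)`. -/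
noncomputable def Vdisp (γ : ℝ) : ℝ :=
  (Real.logb 2 (Real.exp 1)) ^ 2 * (1 - ((1 + γ)⁻¹) ^ 2)

/-- Security threshold `β̃(γ) = (1+γ)·exp(((μ√(V γ) + N_c)/√m)·ln 2) − 1`. -/
noncomputable def betaTilde (μ m Nc γ : ℝ) : ℝ :=
  (1 + γ) * Real.exp (((μ * Real.sqrt (Vdisp γ) + Nc) / Real.sqrt m) * Real.log 2) - 1

/-- Proposition 1: the composite `x ↦ β̃(γ(x))` with `γ(x) = aKx/(cKx+σ²)`
is monotonically increasing on `[0,∞)`. -/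
theorem betaTilde_comp_sinr_monotoneOn
    (a K σ2 c μ m Nc : ℝ) (ha : 0 < a) (hK : 0 < K) (hσ : 0 < σ2) (hc : 0 ≤ c)
    (hμ : 0 ≤ μ) (hm : 0 < m) (hNc : 0 ≤ Nc) :
    MonotoneOn (fun x : ℝ => betaTilde μ m Nc (a * K * x / (c * K * x + σ2)))
      (Set.Ici 0) := by
  have hbt : ∀ γ1 γ2 : ℝ, 0 ≤ γ1 → γ1 ≤ γ2 →
      betaTilde μ m Nc γ1 ≤ betaTilde μ m Nc γ2 := by
    intro γ1 γ2 h1 h12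
    have h1p : (0:ℝ) < 1 + γ1 := by linarith
    have h2p : (0:ℝ) < 1 + γ2 := by linarith
    have hinv : (1 + γ2)⁻¹ ≤ (1 + γ1)⁻¹ := by
      exact inv_anti₀ h1p (by linarith)
    have hinv2 : ((1 + γ2)⁻¹) ^ 2 ≤ ((1 + γ1)⁻¹) ^ 2 := by
      have := inv_nonneg.mpr h2p.le
      nlinarith [inv_nonneg.mpr h1p.le]
    have hV : Vdisp γ1 ≤ Vdisp γ2 := by
      unfold Vdisp
      have : (0:ℝ) ≤ (Real.logb 2 (Real.exp 1)) ^ 2 := sq_nonneg _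
      nlinarith
    have hsq : Real.sqrt (Vdisp γ1) ≤ Real.sqrt (Vdisp γ2) := Real.sqrt_le_sqrt hV
    have harg : ((μ * Real.sqrt (Vdisp γ1) + Nc) / Real.sqrt m) * Real.log 2 ≤
        ((μ * Real.sqrt (Vdisp γ2) + Nc) / Real.sqrt m) * Real.log 2 := by
      have hlog : (0:ℝ) ≤ Real.log 2 := Real.log_nonneg (by norm_num)
      have hsm : (0:ℝ) ≤ Real.sqrt m := Real.sqrt_nonneg m
      have hnum : μ * Real.sqrt (Vdisp γ1) + Nc ≤ μ * Real.sqrt (Vdisp γ2) + Nc := by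
        nlinarith
      have hsm' : (0:ℝ) < Real.sqrt m := Real.sqrt_pos.mpr hm
      gcongr
    have hexp : Real.exp (((μ * Real.sqrt (Vdisp γ1) + Nc) / Real.sqrt m) * Real.log 2) ≤
        Real.exp (((μ * Real.sqrt (Vdisp γ2) + Nc) / Real.sqrt m) * Real.log 2) :=
      Real.exp_le_exp.mpr harg
    unfold betaTilde
    have := mul_le_mul (by linarith : (1:ℝ) + γ1 ≤ 1 + γ2) hexp (Real.exp_pos _).le h2p.le
    linarith
  intro x hx y hy hxy
  simp only [Set.mem_Ici] at hx hy
  have hdx : (0:ℝ) < c * K * x + σ2 := by positivity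
  have hdy : (0:ℝ) < c * K * y + σ2 := by positivity
  have hγ1 : (0:ℝ) ≤ a * K * x / (c * K * x + σ2) := by positivity
  have hγ12 : a * K * x / (c * K * x + σ2) ≤ a * K * y / (c * K * y + σ2) := by
    rw [div_le_div_iff₀ hdx hdy]
    nlinarith [mul_nonneg (mul_nonneg (mul_nonneg ha.le hK.le) hσ.le) (sub_nonneg.mpr hxy)]
  exact hbt _ _ hγ1 hγ12
end

section
/- Let μ ≥ 0, m > 0, and N_c be real constants, and define V(γ) = (log₂ e)²·(1 − (1+γ)⁻²) and β̃(γ) = (1+γ)·exp(((μ·√(V(γ)) + N_c)/√m)·ln 2) − 1. Then β̃ is strictly increasing on [0, ∞). -/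
open Real

/-- For `μ ≥ 0` and `m > 0`, the security threshold `β̃` is strictly increasing
on `[0, ∞)`. -/
theorem betaTilde_strictMonoOn (μ m Nc : ℝ) (hμ : 0 ≤ μ) (hm : 0 < m) :
    StrictMonoOn (betaTilde μ m Nc) (Set.Ici 0) := by
  intro a ha b hb hab
  simp only [Set.mem_Ici] at ha hb
  unfold betaTilde
  have ha1 : (0:ℝ) < 1 + a := by linarith
  have hb1 : (0:ℝ) < 1 + b := by linarith
  have hV : Vdisp a ≤ Vdisp b := by
    unfold Vdisp
    have hinv : (1 + b)⁻¹ ≤ (1 + a)⁻¹ := by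
      apply inv_anti₀ ha1; linarith
    have hsq : ((1 + b)⁻¹) ^ 2 ≤ ((1 + a)⁻¹) ^ 2 := by
      apply pow_le_pow_left₀ (by positivity) hinv
    nlinarith [sq_nonneg (Real.logb 2 (Real.exp 1))]
  have hE : Real.exp (((μ * Real.sqrt (Vdisp a) + Nc) / Real.sqrt m) * Real.log 2)
      ≤ Real.exp (((μ * Real.sqrt (Vdisp b) + Nc) / Real.sqrt m) * Real.log 2) := by
    apply Real.exp_le_exp.mpr
    have hsqrt : Real.sqrt (Vdisp a) ≤ Real.sqrt (Vdisp b) := Real.sqrt_le_sqrt hV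
    have hlog : (0:ℝ) < Real.log 2 := Real.log_pos (by norm_num)
    have hsm : (0:ℝ) < Real.sqrt m := Real.sqrt_pos.mpr hm
    apply mul_le_mul_of_nonneg_right _ hlog.le
    apply div_le_div_of_nonneg_right _ hsm.le
    nlinarith
  have hpos : (0:ℝ) < Real.exp (((μ * Real.sqrt (Vdisp a) + Nc) / Real.sqrt m) * Real.log 2) :=
    Real.exp_pos _
  have := mul_lt_mul (by linarith : 1 + a < 1 + b) hE hpos hb1.le
  linarith
end

section
/- Let m > 0 and R > 0 be real constants, and define V(γ) = (log₂ e)²·(1 − (1+γ)⁻²) and g(γ) = (log₂(1+γ) − R)/√(V(γ)/m) for γ > 0. Then g is strictly increasing on (0, ∞). -/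
open Real

open Set

/- With `x = 1 + γ` and `a = R log 2` the argument equals `√m · x (log x - a) / √(x² - 1)`.
Its derivative in `x` is `(x² - 1 - (log x - a)) / (x² - 1)^{3/2}`, which is positive for `a ≥ 0`
because `log x ≤ x - 1 < x² - 1` on `(1, ∞)`. -/

lemma hasDerivAt_mul_log_sub_div_sqrt (a : ℝ) {x : ℝ} (hx : 1 < x) :
    HasDerivAt (fun x : ℝ => x * (log x - a) / √(x ^ 2 - 1))
      ((x ^ 2 - 1 - (log x - a)) / √(x ^ 2 - 1) ^ 3) x := by
  have hx0 : 0 < x := zero_lt_one.trans hx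
  have hpos : 0 < x ^ 2 - 1 := by nlinarith
  have hs : 0 < √(x ^ 2 - 1) := sqrt_pos.2 hpos
  have hnum : HasDerivAt (fun x : ℝ => x * (log x - a)) (log x - a + 1) x := by
    refine ((hasDerivAt_id' x).mul ((hasDerivAt_log hx0.ne').sub_const a)).congr_deriv ?_
    field_simp
  have hden : HasDerivAt (fun x : ℝ => √(x ^ 2 - 1)) (x / √(x ^ 2 - 1)) x := by
    convert ((hasDerivAt_pow 2 x).sub_const 1).sqrt hpos.ne' using 1
    field_simp
    ring
  refine (hnum.div hden hs.ne').congr_deriv ?_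
  field_simp
  rw [sq_sqrt hpos.le]
  ring

lemma strictMonoOn_mul_log_sub_div_sqrt {a : ℝ} (ha : 0 ≤ a) :
    StrictMonoOn (fun x : ℝ => x * (log x - a) / √(x ^ 2 - 1)) (Ioi 1) := by
  have hderiv := fun x (hx : x ∈ Ioi (1 : ℝ)) => hasDerivAt_mul_log_sub_div_sqrt a hx
  refine strictMonoOn_of_hasDerivWithinAt_pos (convex_Ioi 1)
    (continuousOn_of_forall_continuousAt fun x hx => (hderiv x hx).continuousAt)
    (fun x hx => (hderiv x (interior_subset hx)).hasDerivWithinAt) fun x hx => ?_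
  rw [interior_Ioi] at hx
  have hx : 1 < x := hx
  have hlog : log x ≤ x - 1 := log_le_sub_one_of_pos (zero_lt_one.trans hx)
  have hpos : 0 < x ^ 2 - 1 := by nlinarith
  exact div_pos (by nlinarith) (pow_pos (sqrt_pos.2 hpos) 3)

lemma sqrt_Vdisp {γ : ℝ} (hγ : 0 < 1 + γ) :
    √(Vdisp γ) = √((1 + γ) ^ 2 - 1) / ((1 + γ) * log 2) := by
  have hlog2 : 0 < log 2 := log_pos one_lt_two
  have hV : Vdisp γ = ((1 + γ) ^ 2 - 1) / ((1 + γ) * log 2) ^ 2 := by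
    simp only [Vdisp, logb, log_exp]
    field_simp
  rw [hV, sqrt_div' _ (sq_nonneg _), sqrt_sq (by positivity)]

lemma bler_argument_eq {m R γ : ℝ} (hm : 0 ≤ m) (hγ : 0 < γ) :
    (logb 2 (1 + γ) - R) / √(Vdisp γ / m) =
      √m * ((1 + γ) * (log (1 + γ) - R * log 2) / √((1 + γ) ^ 2 - 1)) := by
  have hs : 0 < √((1 + γ) ^ 2 - 1) := sqrt_pos.2 (by nlinarith)
  rw [sqrt_div' _ hm, sqrt_Vdisp (by linarith), logb]
  rcases hm.eq_or_lt with rfl | hm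
  · simp
  have hsm : 0 < √m := sqrt_pos.2 hm
  field_simp

/-- The argument `g(γ) = (log₂(1+γ) − R)/√(V(γ)/m)` of the Q-function in the
finite-blocklength BLER is strictly increasing on `(0, ∞)`. -/
theorem bler_argument_strictMonoOn (m R : ℝ) (hm : 0 < m) (hR : 0 < R) :
    StrictMonoOn (fun γ : ℝ => (Real.logb 2 (1 + γ) - R) / Real.sqrt (Vdisp γ / m))
      (Set.Ioi 0) := by
  intro γ₁ hγ₁ γ₂ hγ₂ hlt
  simp only [bler_argument_eq hm.le hγ₁, bler_argument_eq hm.le hγ₂]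
  refine mul_lt_mul_of_pos_left ?_ (sqrt_pos.2 hm)
  exact strictMonoOn_mul_log_sub_div_sqrt (by positivity) (lt_add_of_pos_right 1 (mem_Ioi.1 hγ₁))
    (lt_add_of_pos_right 1 (mem_Ioi.1 hγ₂)) (add_lt_add_right hlt 1)
end

section
/- Let m > 0 and R > 0 be real constants, define V(γ) = (log₂ e)²·(1 − (1+γ)⁻²), the Gaussian Q-function Q(y) = (1/√(2π))·∫_y^∞ exp(−t²/2) dt, and the finite-blocklength BLER Ψ(γ) = Q((log₂(1+γ) − R)/√(V(γ)/m)) for γ > 0. Then Ψ is strictly decreasing on (0, ∞). -/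
/-!
With `a = R log 2`, `Ψ(γ) = Q(√m · g(1 + γ))` where `g(x) = (log x - a) / √(1 - x⁻²)`.
`Q` is strictly decreasing, being a tail integral of a positive integrable function, and `g` is
strictly increasing on `(1, ∞)`: its derivative is `(x² - 1 - log x + a) / (x³ (1 - x⁻²)^{3/2})`,
positive because `log x ≤ x - 1 < x² - 1`.
-/

open Real MeasureTheory

/-- Gaussian Q-function `Q(y) = (1/√(2π)) ∫_y^∞ exp(−t²/2) dt`. -/
noncomputable def Qfun (y : ℝ) : ℝ :=
  (1 / Real.sqrt (2 * Real.pi)) * ∫ t in Set.Ioi y, Real.exp (-t ^ 2 / 2)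

/-- Finite-blocklength BLER `Ψ(γ) = Q((log₂(1+γ) − R)/√(V(γ)/m))`. -/
noncomputable def Psi (m R γ : ℝ) : ℝ :=
  Qfun ((Real.logb 2 (1 + γ) - R) / Real.sqrt (Vdisp γ / m))

open Set

theorem strictAnti_setIntegral_Ioi {f : ℝ → ℝ} (hf : Integrable f) (hpos : ∀ t, 0 < f t) :
    StrictAnti fun y => ∫ t in Ioi y, f t := by
  intro a b hab
  have hsplit := intervalIntegral.integral_Ioi_sub_Ioi hf.integrableOn hab.le
  have hmid := intervalIntegral.intervalIntegral_pos_of_pos_on hf.intervalIntegrable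
    (fun t _ => hpos t) hab
  linarith

theorem Qfun_strictAnti : StrictAnti Qfun := by
  have hgauss : Integrable fun t : ℝ => exp (-t ^ 2 / 2) := by
    simpa [div_eq_inv_mul] using integrable_exp_neg_mul_sq (b := (2 : ℝ)⁻¹) (by norm_num)
  exact (strictAnti_setIntegral_Ioi hgauss fun t => exp_pos _).const_mul (by positivity)

/-- Up to the factor `√m`, the argument of `Q` in `Psi` at `x = 1 + γ`, with the rate in nats
`a = R log 2`. -/
noncomputable def normalizedGap (a x : ℝ) : ℝ :=
  (log x - a) / √(1 - (x⁻¹) ^ 2)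

lemma one_sub_inv_sq_pos {x : ℝ} (hx : 1 < x) : 0 < 1 - (x⁻¹) ^ 2 :=
  sub_pos.mpr (pow_lt_one₀ (by positivity) (inv_lt_one_of_one_lt₀ hx) two_ne_zero)

lemma hasDerivAt_normalizedGap (a : ℝ) {x : ℝ} (hx : 1 < x) :
    HasDerivAt (normalizedGap a) ((x ^ 2 - 1 - log x + a) / (x ^ 3 * √(1 - (x⁻¹) ^ 2) ^ 3)) x := by
  have hx0 : x ≠ 0 := by positivity
  have hw := one_sub_inv_sq_pos hx
  have hs : √(1 - (x⁻¹) ^ 2) ^ 2 = 1 - (x⁻¹) ^ 2 := sq_sqrt hw.le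
  have hsqrt := (((hasDerivAt_inv hx0).fun_pow 2).const_sub 1).sqrt hw.ne'
  have hspos := sqrt_pos.mpr hw
  have hdiv : HasDerivAt (normalizedGap a) _ x :=
    ((hasDerivAt_log hx0).sub_const a).fun_div hsqrt hspos.ne'
  convert hdiv using 1
  generalize √(1 - (x⁻¹) ^ 2) = s at hs hspos ⊢
  push_cast
  field_simp
  rw [hs]
  field_simp
  ring

theorem normalizedGap_strictMonoOn {a : ℝ} (ha : 0 ≤ a) :
    StrictMonoOn (normalizedGap a) (Ioi 1) := by
  refine strictMonoOn_of_deriv_pos (convex_Ioi 1)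
    (fun x hx => (hasDerivAt_normalizedGap a hx).continuousAt.continuousWithinAt) ?_
  intro x hx
  rw [interior_Ioi] at hx
  have hx : 1 < x := hx
  rw [(hasDerivAt_normalizedGap a hx).deriv]
  have hlog : log x ≤ x - 1 := log_le_sub_one_of_pos (by linarith)
  have hnum : 0 < x ^ 2 - 1 - log x + a := by nlinarith
  have hs : 0 < √(1 - (x⁻¹) ^ 2) := sqrt_pos.mpr (one_sub_inv_sq_pos hx)
  have : 0 < x := by linarith
  positivity

lemma Psi_eq_Qfun_normalizedGap {m : ℝ} (hm : 0 ≤ m) (R γ : ℝ) :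
    Psi m R γ = Qfun (√m * normalizedGap (R * log 2) (1 + γ)) := by
  have hlogb : logb 2 (exp 1) = (log 2)⁻¹ := by simp [logb]
  rw [Psi, Vdisp, normalizedGap, hlogb, sqrt_div' _ hm, sqrt_mul (by positivity),
    sqrt_sq (by positivity), logb]
  congr 1
  field_simp

/-- The finite-blocklength BLER `Ψ` is strictly decreasing in the SINR on `(0, ∞)`. -/
theorem bler_strictAntiOn (m R : ℝ) (hm : 0 < m) (hR : 0 < R) :
    StrictAntiOn (Psi m R) (Set.Ioi 0) := by
  intro γ₁ hγ₁ γ₂ hγ₂ h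
  have ha : 0 ≤ R * log 2 := by positivity
  have hgap := normalizedGap_strictMonoOn ha (show 1 + γ₁ ∈ Ioi 1 by simpa using hγ₁)
    (show 1 + γ₂ ∈ Ioi 1 by simpa using hγ₂) (by linarith)
  rw [Psi_eq_Qfun_normalizedGap hm.le, Psi_eq_Qfun_normalizedGap hm.le]
  exact Qfun_strictAnti (mul_lt_mul_of_pos_left hgap (sqrt_pos.mpr hm))
end

section
/- Let m > 0, β̃ ≥ 0, and let ς be a real number such that β̃ + √(2π·β̃·(β̃+2))/(2√m) ≤ ς. Then (2m − π)·β̃² − (4m·ς + 2π)·β̃ + 2m·ς² ≥ 0. -/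
/-- Case 1 of the integration interval analysis: if the upper transition point
`β̃ + √(2π·β̃·(β̃+2))/(2√m)` is at most `ς`, then the quadratic expression
`(2m − π)β̃² − (4mς + 2π)β̃ + 2mς²` is nonnegative. -/
theorem critical_point_quadratic_nonneg (m βt ς : ℝ) (hm : 0 < m) (hβ : 0 ≤ βt)
    (hς : βt + Real.sqrt (2 * Real.pi * βt * (βt + 2)) / (2 * Real.sqrt m) ≤ ς) :
    0 ≤ (2 * m - Real.pi) * βt ^ 2 - (4 * m * ς + 2 * Real.pi) * βt + 2 * m * ς ^ 2 := by
  set a := Real.sqrt (2 * Real.pi * βt * (βt + 2)) with ha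
  set b := Real.sqrt m with hb
  have hπ := Real.pi_pos
  have ha0 : 0 ≤ a := Real.sqrt_nonneg _
  have hb0 : 0 < b := Real.sqrt_pos.mpr hm
  have ha2 : a ^ 2 = 2 * Real.pi * βt * (βt + 2) := by
    rw [ha, Real.sq_sqrt]; positivity
  have hb2 : b ^ 2 = m := by rw [hb, Real.sq_sqrt hm.le]
  have h1 : a / (2 * b) ≤ ς - βt := by linarith
  have h2 : 0 ≤ a / (2 * b) := by positivity
  have h3 : a ≤ (ς - βt) * (2 * b) := (div_le_iff₀ (by positivity)).mp h1
  nlinarith [sq_nonneg (ς - βt), mul_pos hb0 hb0, sq_nonneg ((ς - βt) * (2*b) - a),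
    mul_self_nonneg a, sq_nonneg (ς - βt - a/(2*b))]
end

section
/- Let ε₁, ε₂ > 0 and let H, A, B be mutually independent, square-integrable, nonnegative real random variables on a probability space with E[H] = √(π·ε₁)/2, E[H²] = ε₁, E[A] = E[B] = √(π·ε₂)/2, and E[A²] = E[B²] = ε₂. Then Cov(H·A, H·B) = ε₁·ε₂·π·(4−π)/16, Var(H·A) = Var(H·B) = ε₁·ε₂·(1 − π²/16), and the correlation coefficient of H·A and H·B equals π·(4−π)/(16−π²). -/
/-!
Write `X = H·A` and `Y = H·B`. By independence, `E[XY] = E[H²] E[A] E[B]` and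
`E[X] E[Y] = E[H]² E[A] E[B]`, so `Cov(X, Y) = Var(H) E[A] E[B]`, while
`Var(X) = E[H²] E[A²] - (E[H] E[A])²`. Substituting the Rayleigh moments, for which
`E[·]² = π ε / 4`, gives the three values, and the correlation is their quotient.
-/

open MeasureTheory ProbabilityTheory

namespace ProbabilityTheory

variable {Ω : Type*} [MeasurableSpace Ω] {μ : Measure Ω} {X Y Z : Ω → ℝ}

lemma IndepFun.sq (h : X ⟂ᵢ[μ] Y) : IndepFun (X ^ 2) (Y ^ 2) μ := by
  exact h.comp (φ := (· ^ 2)) (ψ := (· ^ 2)) (by fun_prop) (by fun_prop)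

lemma IndepFun.memLp_two_mul (h : X ⟂ᵢ[μ] Y) (hX : MemLp X 2 μ) (hY : MemLp Y 2 μ) :
    MemLp (X * Y) 2 μ := by
  refine (memLp_two_iff_integrable_sq (hX.1.mul hY.1)).2 ?_
  have h_sq_mul := h.sq.integrable_mul hX.integrable_sq hY.integrable_sq
  rwa [← mul_pow] at h_sq_mul

variable [IsProbabilityMeasure μ]

lemma IndepFun.variance_mul (h : X ⟂ᵢ[μ] Y) (hX : MemLp X 2 μ) (hY : MemLp Y 2 μ) :
    Var[X * Y; μ] = μ[X ^ 2] * μ[Y ^ 2] - (μ[X] * μ[Y]) ^ 2 := by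
  rw [variance_eq_sub (h.memLp_two_mul hX hY), mul_pow,
    h.sq.integral_mul_eq_mul_integral (hX.1.pow 2) (hY.1.pow 2),
    h.integral_mul_eq_mul_integral hX.1 hY.1]

lemma covariance_mul_mul_of_iIndepFun (h : iIndepFun ![X, Y, Z] μ) (hX : MemLp X 2 μ)
    (hY : MemLp Y 2 μ) (hZ : MemLp Z 2 μ) :
    cov[X * Y, X * Z; μ] = Var[X; μ] * μ[Y] * μ[Z] := by
  have hXY : X ⟂ᵢ[μ] Y := by simpa using h.indepFun (i := 0) (j := 1) (by decide)
  have hXZ : X ⟂ᵢ[μ] Z := by simpa using h.indepFun (i := 0) (j := 2) (by decide)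
  have hYZ : Y ⟂ᵢ[μ] Z := by simpa using h.indepFun (i := 1) (j := 2) (by decide)
  have hmeas : ∀ i, AEMeasurable (![X, Y, Z] i) μ := by
    intro i
    fin_cases i
    exacts [hX.1.aemeasurable, hY.1.aemeasurable, hZ.1.aemeasurable]
  have hX_YZ : X ⟂ᵢ[μ] Y * Z := by
    simpa using h.indepFun_mul_right₀ hmeas 0 1 2 (by decide) (by decide)
  have hX2_YZ : IndepFun (X ^ 2) (Y * Z) μ := by
    exact hX_YZ.comp (φ := (· ^ 2)) (by fun_prop) measurable_id
  have hprod : X * Y * (X * Z) = X ^ 2 * (Y * Z) := by ring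
  rw [covariance_eq_sub (hXY.memLp_two_mul hX hY) (hXZ.memLp_two_mul hX hZ), hprod,
    hX2_YZ.integral_mul_eq_mul_integral (hX.1.pow 2) (hY.1.mul hZ.1),
    hYZ.integral_mul_eq_mul_integral hY.1 hZ.1, hXY.integral_mul_eq_mul_integral hX.1 hY.1,
    hXZ.integral_mul_eq_mul_integral hX.1 hZ.1, variance_eq_sub hX]
  ring

end ProbabilityTheory

theorem inter_port_correlation_general {Ω : Type*} [MeasureSpace Ω]
    [IsProbabilityMeasure (ℙ : Measure Ω)] (ε₁ ε₂ : ℝ) (hε₁ : 0 < ε₁) (hε₂ : 0 < ε₂)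
    (H A B : Ω → ℝ)
    (hindep : iIndepFun ![H, A, B] ℙ)
    (hH2 : MemLp H 2 ℙ) (hA2 : MemLp A 2 ℙ) (hB2 : MemLp B 2 ℙ)
    (hEH : (∫ ω, H ω) = Real.sqrt (Real.pi * ε₁) / 2)
    (hEH2 : (∫ ω, (H ω) ^ 2) = ε₁)
    (hEA : (∫ ω, A ω) = Real.sqrt (Real.pi * ε₂) / 2)
    (hEA2 : (∫ ω, (A ω) ^ 2) = ε₂)
    (hEB : (∫ ω, B ω) = Real.sqrt (Real.pi * ε₂) / 2)
    (hEB2 : (∫ ω, (B ω) ^ 2) = ε₂) :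
    (∫ ω, (H ω * A ω - ∫ ω', H ω' * A ω') * (H ω * B ω - ∫ ω', H ω' * B ω')) =
      ε₁ * ε₂ * Real.pi * (4 - Real.pi) / 16 ∧
    variance (fun ω => H ω * A ω) ℙ = ε₁ * ε₂ * (1 - Real.pi ^ 2 / 16) ∧
    variance (fun ω => H ω * B ω) ℙ = ε₁ * ε₂ * (1 - Real.pi ^ 2 / 16) ∧
    (∫ ω, (H ω * A ω - ∫ ω', H ω' * A ω') * (H ω * B ω - ∫ ω', H ω' * B ω')) /
        (Real.sqrt (variance (fun ω => H ω * A ω) ℙ) *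
          Real.sqrt (variance (fun ω => H ω * B ω) ℙ)) =
      Real.pi * (4 - Real.pi) / (16 - Real.pi ^ 2) := by
  have hmean_sq {ε : ℝ} (hε : 0 < ε) : (√(Real.pi * ε) / 2) ^ 2 = Real.pi * ε / 4 := by
    rw [div_pow, Real.sq_sqrt (by positivity)]
    ring
  have hcov : cov[H * A, H * B] = ε₁ * ε₂ * Real.pi * (4 - Real.pi) / 16 := by
    rw [covariance_mul_mul_of_iIndepFun hindep hH2 hA2 hB2, variance_eq_sub hH2]
    simp only [Pi.pow_apply]
    rw [hEH2, hEH, hEA, hEB, hmean_sq hε₁, mul_assoc, ← sq, hmean_sq hε₂]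
    ring
  have hvar {C : Ω → ℝ} (hHC : H ⟂ᵢ C) (hC2 : MemLp C 2 ℙ) (hEC : ∫ ω, C ω = √(Real.pi * ε₂) / 2)
      (hEC2 : ∫ ω, C ω ^ 2 = ε₂) : Var[H * C] = ε₁ * ε₂ * (1 - Real.pi ^ 2 / 16) := by
    rw [hHC.variance_mul hH2 hC2]
    simp only [Pi.pow_apply]
    rw [hEH2, hEC2, hEH, hEC, mul_pow, hmean_sq hε₁, hmean_sq hε₂]
    ring
  have hvarA := hvar (by simpa using hindep.indepFun (i := 0) (j := 1) (by decide)) hA2 hEA hEA2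
  have hvarB := hvar (by simpa using hindep.indepFun (i := 0) (j := 2) (by decide)) hB2 hEB hEB2
  refine ⟨hcov, hvarA, hvarB, ?_⟩
  have hπ : Real.pi ^ 2 < 16 := by nlinarith [Real.pi_pos, Real.pi_lt_four]
  change cov[H * A, H * B] / (√Var[H * A] * √Var[H * B]) = _
  rw [hcov, hvarA, hvarB, Real.mul_self_sqrt (by nlinarith [mul_pos hε₁ hε₂])]
  field_simp

/-- Inter-port correlation of the block-correlation model: if `H`, `A`, `B` are
mutually independent, square-integrable, nonnegative random variables with
Rayleigh-type moments `E[H] = √(πε₁)/2`, `E[H²] = ε₁`,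
`E[A] = E[B] = √(πε₂)/2`, `E[A²] = E[B²] = ε₂`, then
`Cov(HA, HB) = ε₁ε₂π(4−π)/16`, `Var(HA) = Var(HB) = ε₁ε₂(1 − π²/16)`, and the
correlation coefficient of `HA` and `HB` equals `π(4−π)/(16−π²)`. -/
theorem inter_port_correlation {Ω : Type*} [MeasureSpace Ω]
    [IsProbabilityMeasure (ℙ : Measure Ω)] (ε₁ ε₂ : ℝ) (hε₁ : 0 < ε₁) (hε₂ : 0 < ε₂)
    (H A B : Ω → ℝ)
    (hindep : iIndepFun ![H, A, B] ℙ)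
    (hH2 : MemLp H 2 ℙ) (hA2 : MemLp A 2 ℙ) (hB2 : MemLp B 2 ℙ)
    (hHpos : ∀ ω, 0 ≤ H ω) (hApos : ∀ ω, 0 ≤ A ω) (hBpos : ∀ ω, 0 ≤ B ω)
    (hEH : (∫ ω, H ω) = Real.sqrt (Real.pi * ε₁) / 2)
    (hEH2 : (∫ ω, (H ω) ^ 2) = ε₁)
    (hEA : (∫ ω, A ω) = Real.sqrt (Real.pi * ε₂) / 2)
    (hEA2 : (∫ ω, (A ω) ^ 2) = ε₂)
    (hEB : (∫ ω, B ω) = Real.sqrt (Real.pi * ε₂) / 2)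
    (hEB2 : (∫ ω, (B ω) ^ 2) = ε₂) :
    (∫ ω, (H ω * A ω - ∫ ω', H ω' * A ω') * (H ω * B ω - ∫ ω', H ω' * B ω')) =
      ε₁ * ε₂ * Real.pi * (4 - Real.pi) / 16 ∧
    variance (fun ω => H ω * A ω) ℙ = ε₁ * ε₂ * (1 - Real.pi ^ 2 / 16) ∧
    variance (fun ω => H ω * B ω) ℙ = ε₁ * ε₂ * (1 - Real.pi ^ 2 / 16) ∧
    (∫ ω, (H ω * A ω - ∫ ω', H ω' * A ω') * (H ω * B ω - ∫ ω', H ω' * B ω')) /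
        (Real.sqrt (variance (fun ω => H ω * A ω) ℙ) *
          Real.sqrt (variance (fun ω => H ω * B ω) ℙ)) =
      Real.pi * (4 - Real.pi) / (16 - Real.pi ^ 2) :=
  inter_port_correlation_general ε₁ ε₂ hε₁ hε₂ H A B hindep hH2 hA2 hB2 hEH hEH2 hEA hEA2 hEB hEB2
end
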